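/- arXiv:0710.3553 — 7 statements merged into one kernel-verified Lean document; each statement's English description precedes it below -/
import Mathlib

section
/- Every Δ-generated topological space is homeomorphic to the disjoint union (topological sum) of its nonempty connected components; moreover its connected components coincide with its path-connected components. In particular a Δ-generated space is connected if and only if it is path-connected. -/
/-- A topological space is Δ-generated if its topology is final with respect to all
continuous maps from the standard topological simplices `Δⁿ` into it. -/
def IsDeltaGenerated (X : Type*) [TopologicalSpace X] : Prop :=
  ∀ u : Set X, IsOpen u ↔
    ∀ (n : ℕ) (f : C((stdSimplex ℝ (Fin (n + 1)) : Set (Fin (n + 1) → ℝ)), X)),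
      IsOpen (f ⁻¹' u)

/-!
A Δ-generated space is a quotient of a disjoint union of simplices. Simplices are convex, hence
locally path-connected, and local path-connectedness passes to sums and quotients. In a locally
path-connected space path components are open, so they are the connected components, and the
space of components is discrete; a space splits as the sum of the fibres of any continuous map
to a discrete space.
-/

open Topology TopologicalSpace

theorem Topology.IsGeneratedBy.locallyPathConnectedSpace {ι : Type*} {X : ι → Type*}
    [∀ i, TopologicalSpace (X i)] [∀ i, LocallyPathConnectedSpace (X i)]
    {Y : Type*} [TopologicalSpace Y] [IsGeneratedBy X Y] : LocallyPathConnectedSpace Y := by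
  rw [← IsGeneratedBy.generatedBy_eq (X := X) (Y := Y), generatedBy_eq_coinduced]
  exact LocallyPathConnectedSpace.coinduced _

theorem IsDeltaGenerated.isGeneratedBy {X : Type*} [TopologicalSpace X]
    (hX : IsDeltaGenerated X) :
    IsGeneratedBy (fun n : ℕ ↦ (stdSimplex ℝ (Fin (n + 1)) : Set (Fin (n + 1) → ℝ))) X := by
  refine IsGeneratedBy.iff_le_generatedBy.mpr fun u hu ↦ (hX u).mpr fun n f ↦ ?_
  simp only [isOpen_iSup_iff, isOpen_coinduced] at hu
  exact hu n f

theorem IsDeltaGenerated.locallyPathConnectedSpace {X : Type*} [TopologicalSpace X]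
    (hX : IsDeltaGenerated X) : LocallyPathConnectedSpace X :=
  have := hX.isGeneratedBy
  have (n : ℕ) := (convex_stdSimplex ℝ (Fin (n + 1))).locallyPathConnectedSpace
  IsGeneratedBy.locallyPathConnectedSpace
    (X := fun n : ℕ ↦ (stdSimplex ℝ (Fin (n + 1)) : Set (Fin (n + 1) → ℝ)))

def Homeomorph.sigmaFiberOfDiscrete {X Y : Type*} [TopologicalSpace X] [TopologicalSpace Y]
    [DiscreteTopology Y] {f : X → Y} (hf : Continuous f) : (Σ y, {x // f x = y}) ≃ₜ X :=
  (Equiv.sigmaFiberEquiv f).toHomeomorphOfContinuousOpen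
    (continuous_sigma fun _ ↦ continuous_subtype_val)
    (isOpenMap_sigma.mpr fun y ↦ ((isOpen_discrete {y}).preimage hf).isOpenMap_subtype_val)

/-- Every Δ-generated space is homeomorphic to the topological sum of its (nonempty)
connected components, and its connected components coincide with its path components. -/
theorem deltaGenerated_homeomorph_sigma_connectedComponents (X : Type*) [TopologicalSpace X]
    (hX : IsDeltaGenerated X) :
    (∀ x : X, connectedComponent x = pathComponent x) ∧
      Nonempty (X ≃ₜ (Σ c : ConnectedComponents X, {x : X // ConnectedComponents.mk x = c})) := by
  have := hX.locallyPathConnectedSpace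
  exact ⟨fun x ↦ (pathComponent_eq_connectedComponent x).symm,
    ⟨(Homeomorph.sigmaFiberOfDiscrete ConnectedComponents.continuous_coe).symm⟩⟩
end

section
/- A Δ-generated topological space is connected if and only if it is path-connected. -/
section

variable {X Y : Type*} [TopologicalSpace X] [TopologicalSpace Y]

theorem ContinuousMap.preimage_eq_univ_or_empty_of_joined [PathConnectedSpace Y] (f : C(Y, X))
    {u : Set X} (hu : ∀ ⦃x y⦄, Joined x y → x ∈ u → y ∈ u) : f ⁻¹' u = Set.univ ∨ f ⁻¹' u = ∅ := by
  refine (Set.eq_empty_or_nonempty _).symm.imp (fun ⟨s, hs⟩ => ?_) id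
  exact Set.eq_univ_of_forall fun t => hu ((PathConnectedSpace.joined s t).map f.continuous) hs

theorem IsDeltaGenerated.isOpen_of_joined (hX : IsDeltaGenerated X) {u : Set X}
    (hu : ∀ ⦃x y⦄, Joined x y → x ∈ u → y ∈ u) : IsOpen u := by
  refine (hX u).2 fun _ f => ?_
  rcases f.preimage_eq_univ_or_empty_of_joined hu with h | h <;> rw [h]
  exacts [isOpen_univ, isOpen_empty]

theorem IsDeltaGenerated.isClopen_pathComponent (hX : IsDeltaGenerated X) (x : X) :
    IsClopen (pathComponent x) :=
  ⟨isOpen_compl_iff.1 <| hX.isOpen_of_joined fun _ _ hyz hy hz =>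
      hy (hyz.symm.mem_pathComponent hz),
    hX.isOpen_of_joined fun _ _ hyz hy => hyz.mem_pathComponent hy⟩

end

/-- A Δ-generated topological space is connected iff it is path-connected. -/
theorem deltaGenerated_connected_iff_pathConnected (X : Type*) [TopologicalSpace X]
    (hX : IsDeltaGenerated X) : ConnectedSpace X ↔ PathConnectedSpace X := by
  refine ⟨fun _ => ?_, fun _ => inferInstance⟩
  obtain ⟨x⟩ := ‹ConnectedSpace X›.toNonempty
  exact pathConnectedSpace_iff_eq.2
    ⟨x, (hX.isClopen_pathComponent x).eq_univ ⟨x, mem_pathComponent_self x⟩⟩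
end

section
/- Every open subset of a Δ-generated topological space, equipped with the subspace topology, is Δ-generated. -/
/-!
Let `u ⊆ U` have open preimage under every simplex `Δⁿ → U`; it suffices to show that `u` is
open in `X`, i.e. that `f⁻¹ u` is open for every simplex `f : Δⁿ → X`. Near a point `p` of
`f⁻¹ u` the set `f⁻¹ U` is a neighbourhood of `p`, and a homothety of `Δⁿ` centred at `p` with a
small ratio embeds `Δⁿ` onto a neighbourhood of `p` inside `f⁻¹ U`. Composed with `f` it is a
simplex in `U`, so the preimage of `u` under it is open, and transporting this back along the
embedding shows that `f⁻¹ u` is a neighbourhood of `p`.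
-/

open Set Filter Topology

lemma Topology.IsEmbedding.mem_nhds_of_preimage_mem_nhds {Y Z : Type*} [TopologicalSpace Y]
    [TopologicalSpace Z] {g : Z → Y} (hg : IsEmbedding g) {z : Z} (hrange : range g ∈ 𝓝 (g z))
    {s : Set Y} (hs : g ⁻¹' s ∈ 𝓝 z) : s ∈ 𝓝 (g z) := by
  rw [← nhdsWithin_eq_nhds.2 hrange, ← hg.map_nhds_eq]
  exact hs

namespace stdSimplex

variable {ι : Type*} [Fintype ι]

lemma homothety_mem {p x : ι → ℝ} (hp : p ∈ stdSimplex ℝ ι) (hx : x ∈ stdSimplex ℝ ι) {ε : ℝ}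
    (hε : ε ∈ Icc 0 1) : AffineMap.homothety p ε x ∈ stdSimplex ℝ ι := by
  rw [AffineMap.homothety_eq_lineMap]
  exact (convex_stdSimplex ℝ ι).lineMap_mem hp hx hε

noncomputable def homothety (p : stdSimplex ℝ ι) {ε : ℝ} (hε : ε ∈ Icc 0 1) :
    C(stdSimplex ℝ ι, stdSimplex ℝ ι) where
  toFun x := ⟨AffineMap.homothety (p : ι → ℝ) ε x, homothety_mem p.2 x.2 hε⟩
  continuous_toFun := by fun_prop

variable (p : stdSimplex ℝ ι) {ε : ℝ} (hε : ε ∈ Icc 0 1)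

@[simp]
lemma homothety_apply_self : homothety p hε p = p :=
  Subtype.ext (AffineMap.homothety_apply_same _ _)

lemma isEmbedding_homothety (hε₀ : ε ≠ 0) : IsEmbedding (homothety p hε) :=
  (homothety p hε).continuous.isClosedEmbedding
    (fun _ _ h ↦ Subtype.ext (AffineMap.homothety_injective _ hε₀ (congrArg Subtype.val h)))
    |>.isEmbedding

lemma dist_homothety_self (x : stdSimplex ℝ ι) : dist (homothety p hε x) p = ε * dist p x :=
  (dist_homothety_center (p : ι → ℝ) (x : ι → ℝ) ε).trans
    (by rw [Real.norm_of_nonneg hε.1]; rfl)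

lemma range_homothety_mem_nhds (hε₀ : 0 < ε) : range (homothety p hε) ∈ 𝓝 p := by
  -- The range is `{q | ∀ i, (1 - ε) * p i ≤ q i}`: a neighbourhood of `p`, since each constraint
  -- is vacuous where `p i = 0` and holds strictly at `p` where `0 < p i`.
  have hnhds : ∀ᶠ q : stdSimplex ℝ ι in 𝓝 p, ∀ i, (1 - ε) * p i ≤ q i := by
    refine eventually_all.2 fun i ↦ ?_
    rcases (stdSimplex.zero_le p i).eq_or_lt with hpi | hpi
    · exact .of_forall fun q ↦ by simp [← hpi]
    · have : (1 - ε) * p i < p i := by nlinarith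
      exact ((((continuous_apply i).comp continuous_subtype_val).tendsto p).eventually_const_lt
        this).mono fun _ ↦ le_of_lt
  refine mem_of_superset hnhds fun q hq ↦ ?_
  have hmem : AffineMap.homothety (p : ι → ℝ) ε⁻¹ q ∈ stdSimplex ℝ ι := by
    refine ⟨fun i ↦ ?_, ?_⟩
    · have hpq : 0 ≤ q i - (1 - ε) * p i := sub_nonneg.2 (hq i)
      calc (0 : ℝ) ≤ ε⁻¹ * (q i - (1 - ε) * p i) := by positivity
        _ = _ := by simp [AffineMap.homothety_apply]; field_simp; ring
    · simp [AffineMap.homothety_apply, Finset.sum_add_distrib, ← Finset.mul_sum]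
  exact ⟨⟨_, hmem⟩, Subtype.ext ((AffineMap.homothety_eq_iff_of_mul_eq_one
    (mul_inv_cancel₀ hε₀.ne')).2 rfl)⟩

lemma exists_isEmbedding_range_mem_nhds_subset {w : Set (stdSimplex ℝ ι)} (hw : w ∈ 𝓝 p) :
    ∃ g : C(stdSimplex ℝ ι, stdSimplex ℝ ι),
      IsEmbedding g ∧ g p = p ∧ range g ∈ 𝓝 p ∧ range g ⊆ w := by
  obtain ⟨r, hr, hball⟩ := Metric.mem_nhds_iff.1 hw
  obtain ⟨c, hc, hcr⟩ := exists_pos_mul_lt hr (Metric.diam (stdSimplex ℝ ι))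
  have hε : min c 1 ∈ Icc 0 1 := ⟨by positivity, min_le_right _ _⟩
  have hε₀ : 0 < min c 1 := by positivity
  refine ⟨homothety p hε, isEmbedding_homothety p hε hε₀.ne', homothety_apply_self p hε,
    range_homothety_mem_nhds p hε hε₀, ?_⟩
  rintro _ ⟨x, rfl⟩
  refine hball (Metric.mem_ball.2 ?_)
  calc dist (homothety p hε x) p = min c 1 * dist p x := dist_homothety_self p hε x
    _ ≤ c * Metric.diam (stdSimplex ℝ ι) := by
      gcongr
      · exact min_le_left _ _
      · exact Metric.dist_le_diam_of_mem (bounded_stdSimplex ι) p.2 x.2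
    _ < r := by rwa [mul_comm]

end stdSimplex

/-- Every open subset of a Δ-generated space, with the subspace topology,
is Δ-generated. -/
theorem isDeltaGenerated_of_isOpen {X : Type*} [TopologicalSpace X]
    (hX : IsDeltaGenerated X) {U : Set X} (hU : IsOpen U) : IsDeltaGenerated U := by
  intro u
  refine ⟨fun hu n f ↦ hu.preimage f.continuous, fun hu ↦ ?_⟩
  rw [hU.isOpenEmbedding_subtypeVal.isOpen_iff_image_isOpen, hX]
  refine fun n f ↦ isOpen_iff_mem_nhds.2 fun p hp ↦ ?_
  have hfpU : f p ∈ U := Subtype.range_coe.subset (image_subset_range _ _ hp)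
  obtain ⟨g, hg, hgp, hrange, hsub⟩ := stdSimplex.exists_isEmbedding_range_mem_nhds_subset p
    ((hU.preimage f.continuous).mem_nhds hfpU)
  let F : C(stdSimplex ℝ (Fin (n + 1)), U) := ⟨fun x ↦ ⟨f (g x), hsub ⟨x, rfl⟩⟩, by fun_prop⟩
  have hF : g ⁻¹' (f ⁻¹' (Subtype.val '' u)) = F ⁻¹' u := by
    conv_rhs => rw [← preimage_image_eq u Subtype.val_injective]
    rfl
  have hpre : g ⁻¹' (f ⁻¹' (Subtype.val '' u)) ∈ 𝓝 p :=
    hF ▸ (hu n F).mem_nhds (by rwa [← hF, mem_preimage, hgp])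
  simpa only [hgp] using hg.mem_nhds_of_preimage_mem_nhds (hgp.symm ▸ hrange) hpre
end

section
/- Let B be a class of compact Hausdorff topological spaces such that the product (in Top) of any two members of B is B-generated. Then for any B ∈ B and any B-generated space X, the product B × X (in Top) is B-generated. -/
/-!
Let `u ⊆ B × X` have open preimages under all probes, and let `(b, x) ∈ u`. The slice of `u`
through `x` is open in `B`, so it contains a compact neighbourhood `C` of `b`. The set `W` of
points `x'` with `C × {x'} ⊆ u` is open in `X`: its preimage under a probe `g : B' → X` is the
corresponding set for `(id × g)⁻¹ u`, which is open in the `B`-generated space `B × B'`, and the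
tube lemma applies. Hence `C × W ⊆ u` is a neighbourhood of `(b, x)`.
-/

universe u

/-- A topological space `X` is `B`-generated (for a family `B` of spaces) if its topology
is final with respect to all continuous maps from members of `B` into `X`. -/
def BGenerated {ι : Type u} (B : ι → Type u) [∀ i, TopologicalSpace (B i)]
    (X : Type u) [TopologicalSpace X] : Prop :=
  ∀ u : Set X, IsOpen u ↔ ∀ (i : ι) (f : C(B i, X)), IsOpen (f ⁻¹' u)

theorem IsCompact.isOpen_setOf_forall_mem_prod {K Y : Type*} [TopologicalSpace K]
    [TopologicalSpace Y] {C : Set K} (hC : IsCompact C) {F : Set (K × Y)} (hF : IsOpen F) :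
    IsOpen {y : Y | ∀ c ∈ C, (c, y) ∈ F} :=
  isOpen_iff_eventually.2 fun _ hy ↦ hC.eventually_forall_of_forall_eventually fun c hc ↦
    continuous_swap.continuousAt.preimage_mem_nhds (hF.mem_nhds (hy c hc))

theorem isOpen_of_isOpen_slices_of_isOpen_tubes {K Y : Type*} [TopologicalSpace K]
    [LocallyCompactSpace K] [TopologicalSpace Y] {u : Set (K × Y)}
    (hslice : ∀ y, IsOpen {k | (k, y) ∈ u})
    (htube : ∀ C : Set K, IsCompact C → IsOpen {y | ∀ c ∈ C, (c, y) ∈ u}) : IsOpen u := by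
  refine isOpen_iff_mem_nhds.2 fun ⟨k, y⟩ hky ↦ ?_
  obtain ⟨C, hCk, hCu, hC⟩ := local_compact_nhds ((hslice y).mem_nhds hky)
  exact Filter.mem_of_superset (prod_mem_nhds hCk ((htube C hC).mem_nhds fun c hc ↦ hCu hc))
    fun p ⟨hp₁, hp₂⟩ ↦ hp₂ p.1 hp₁

section

variable {ι : Type u} {B : ι → Type u} [∀ i, TopologicalSpace (B i)]
  {X : Type u} [TopologicalSpace X]

theorem bGenerated_of_forall_isOpen_preimage
    (h : ∀ u : Set X, (∀ i (f : C(B i, X)), IsOpen (f ⁻¹' u)) → IsOpen u) : BGenerated B X :=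
  fun u ↦ ⟨fun hu _ f ↦ hu.preimage f.continuous, h u⟩

theorem BGenerated.isOpen_setOf_forall_mem_prod (hX : BGenerated B X) {K : Type*}
    [TopologicalSpace K] {u : Set (K × X)}
    (hu : ∀ j (g : C(B j, X)), IsOpen (Prod.map id g ⁻¹' u)) {C : Set K} (hC : IsCompact C) :
    IsOpen {x | ∀ c ∈ C, (c, x) ∈ u} :=
  (hX _).2 fun j g ↦ hC.isOpen_setOf_forall_mem_prod (hu j g)

end

/-- If every member of `B` is compact Hausdorff and the binary product (in `Top`) of any
two members of `B` is `B`-generated, then for any `B ∈ B` and any `B`-generated space `X`,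
the product `B × X` (in `Top`) is `B`-generated. -/
theorem bGenerated_prod_of_mem {ι : Type u} (B : ι → Type u) [∀ i, TopologicalSpace (B i)]
    [∀ i, CompactSpace (B i)] [∀ i, T2Space (B i)]
    (hprod : ∀ i j, BGenerated B (B i × B j))
    (X : Type u) [TopologicalSpace X] (hX : BGenerated B X) (i : ι) :
    BGenerated B (B i × X) := by
  refine bGenerated_of_forall_isOpen_preimage fun u hu ↦ ?_
  have hprobe : ∀ j (g : C(B j, X)), IsOpen (Prod.map id g ⁻¹' u) := fun j g ↦
    (hprod i j _).2 fun k h ↦ hu k (((ContinuousMap.id _).prodMap g).comp h)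
  exact isOpen_of_isOpen_slices_of_isOpen_tubes (fun x ↦ hu i ⟨fun b ↦ (b, x), by fun_prop⟩)
    fun C hC ↦ hX.isOpen_setOf_forall_mem_prod hprobe hC
end

section
/- Let B be a class of compact Hausdorff spaces closed under the condition that binary products of members are B-generated. For B-generated spaces X and Y with Y compact Hausdorff, the B-product k_B(X × Y) equals X × Y; that is, the product X × Y in Top is already B-generated. -/
universe u

/-- Tube lemma: the set of `a` whose slice `{a} × C` lies in an open `w` is open. -/
lemma tube_open_left {A Z : Type*} [TopologicalSpace A] [TopologicalSpace Z]
    {w : Set (A × Z)} (hw : IsOpen w) {C : Set Z} (hC : IsCompact C) :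
    IsOpen {a : A | ∀ z ∈ C, (a, z) ∈ w} := by
  rw [isOpen_iff_forall_mem_open]
  intro a ha
  obtain ⟨U, V, hU, hV, haU, hCV, hsub⟩ :=
    generalized_tube_lemma isCompact_singleton hC hw
      (by rintro ⟨x, z⟩ ⟨hx, hz⟩; rcases hx with rfl; exact ha z hz)
  exact ⟨U, fun b hb z hz => hsub ⟨hb, hCV hz⟩, hU, haU rfl⟩

lemma tube_open_right {A Z : Type*} [TopologicalSpace A] [TopologicalSpace Z]
    {w : Set (Z × A)} (hw : IsOpen w) {C : Set Z} (hC : IsCompact C) :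
    IsOpen {a : A | ∀ z ∈ C, (z, a) ∈ w} :=
  tube_open_left (hw.preimage continuous_swap : IsOpen (Prod.swap ⁻¹' w)) hC

/-- If every member of `B` is compact Hausdorff and binary products of members of `B` are
`B`-generated, then for `B`-generated spaces `X` and `Y` with `Y` compact Hausdorff, the
product `X × Y` (in `Top`) is already `B`-generated. -/
theorem bGenerated_prod_compact {ι : Type u} (B : ι → Type u) [∀ i, TopologicalSpace (B i)]
    [∀ i, CompactSpace (B i)] [∀ i, T2Space (B i)]
    (hprod : ∀ i j, BGenerated B (B i × B j))
    (X Y : Type u) [TopologicalSpace X] [TopologicalSpace Y]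
    [CompactSpace Y] [T2Space Y]
    (hX : BGenerated B X) (hY : BGenerated B Y) :
    BGenerated B (X × Y) := by
  intro u
  constructor
  · intro hu i f
    exact hu.preimage f.continuous
  · intro hu
    -- slices of `u` in the `Y` direction are open
    have slice : ∀ x : X, IsOpen {y : Y | (x, y) ∈ u} := by
      intro x
      rw [hY]
      intro j g
      exact hu j ⟨fun b => (x, g b), by fun_prop⟩
    -- key: for any probe `f` into `X`, the pullback of `u` to `B i × Y` is open
    have key : ∀ (i : ι) (f : C(B i, X)), IsOpen {p : B i × Y | (f p.1, p.2) ∈ u} := by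
      intro i f
      rw [isOpen_iff_mem_nhds]
      rintro ⟨b₀, y₀⟩ hb
      have hT : IsOpen {b : B i | (f b, y₀) ∈ u} :=
        hu i ⟨fun b => (f b, y₀), by fun_prop⟩
      obtain ⟨K, hKn, hKT, hKc⟩ := local_compact_nhds (hT.mem_nhds hb)
      have hUy : IsOpen {y : Y | ∀ b ∈ K, (f b, y) ∈ u} := by
        rw [hY]
        intro j g
        have hfg : IsOpen {q : B i × B j | (f q.1, g q.2) ∈ u} := by
          rw [hprod i j]
          intro k h
          exact hu k ⟨fun c => (f (h c).1, g (h c).2), by fun_prop⟩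
        exact tube_open_right hfg hKc
      have hy₀ : y₀ ∈ {y : Y | ∀ b ∈ K, (f b, y) ∈ u} := fun b hbK => hKT hbK
      filter_upwards [prod_mem_nhds hKn (hUy.mem_nhds hy₀)]
      rintro ⟨b, y⟩ ⟨hbK, hyU⟩
      exact hyU b hbK
    rw [isOpen_iff_mem_nhds]
    rintro ⟨x₀, y₀⟩ hxy
    obtain ⟨C, hCn, hCS, hCc⟩ := local_compact_nhds ((slice x₀).mem_nhds hxy)
    have hV : IsOpen {x : X | ∀ y ∈ C, (x, y) ∈ u} := by
      rw [hX]
      intro i f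
      exact tube_open_left (key i f) hCc
    have hx₀ : x₀ ∈ {x : X | ∀ y ∈ C, (x, y) ∈ u} := fun y hy => hCS hy
    filter_upwards [prod_mem_nhds (hV.mem_nhds hx₀) hCn]
    rintro ⟨x, y⟩ ⟨hxV, hyC⟩
    exact hxV y hyC
end

section
/- The class of maps that are inclusions of a strong deformation retract of topological spaces is closed under pushout: if i : A → B admits a strong deformation retraction and the square with A → C, i : A → B, j : C → D, B → D is a pushout in Top, then j : C → D admits a strong deformation retraction, provided j is an embedding. -/
/-!
The retraction `D → C` is induced by `f ∘ r` on `B` and the identity on `C`. The homotopy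
`[0,1] × D → D` is induced by `k ∘ H` on `[0,1] × B` and the constant homotopy on `[0,1] × C`:
since `[0,1]` is locally compact, `[0,1] × -` preserves pushouts in `Top`, which is seen by
currying into the compact-open space `C([0,1], D)`. The endpoint identities then only need to be
checked on the images of `k` and `j`, which cover `D`.
-/

universe u

/-- A continuous map `i : A → B` is an inclusion of a strong deformation retract if there
are a continuous retraction `r : B → A` with `r ∘ i = id` and a homotopy
`H : [0,1] × B → B` from `id_B` to `i ∘ r` which is stationary on `i(A)`. -/
def IsSDRInclusion {A B : Type*} [TopologicalSpace A] [TopologicalSpace B]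
    (i : A → B) : Prop :=
  Continuous i ∧ ∃ (r : B → A) (H : unitInterval × B → B),
    Continuous r ∧ Continuous H ∧ r ∘ i = id ∧
    (∀ b, H (0, b) = b) ∧ (∀ b, H (1, b) = i (r b)) ∧ ∀ t a, H (t, i a) = i a

open CategoryTheory

universe v

namespace CategoryTheory.IsPushout

section

variable {A B C D : TopCat.{u}} {i : A ⟶ B} {f : A ⟶ C} {k : B ⟶ D} {j : C ⟶ D}

lemma w_apply (hpo : IsPushout i f k j) (a : A) : k (i a) = j (f a) :=
  ConcreteCategory.congr_hom hpo.w a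

lemma exists_eq_or_exists_eq (hpo : IsPushout i f k j) (d : D) :
    (∃ b, k b = d) ∨ ∃ c, j c = d :=
  Limits.Types.eq_or_eq_of_isPushout (hpo.map (forget TopCat)) d

lemma exists_continuous_desc (hpo : IsPushout i f k j) {X : Type u} [TopologicalSpace X]
    {g : B → X} {h : C → X} (hg : Continuous g) (hh : Continuous h)
    (hgh : ∀ a, g (i a) = h (f a)) :
    ∃ φ : D → X, Continuous φ ∧ (∀ b, φ (k b) = g b) ∧ ∀ c, φ (j c) = h c := by
  let gB : B ⟶ TopCat.of X := TopCat.ofHom ⟨g, hg⟩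
  let hC : C ⟶ TopCat.of X := TopCat.ofHom ⟨h, hh⟩
  have hcomm : i ≫ gB = f ≫ hC := by ext a; exact hgh a
  exact ⟨hpo.desc gB hC hcomm, (hpo.desc gB hC hcomm).hom.continuous,
    ConcreteCategory.congr_hom (hpo.inl_desc gB hC hcomm),
    ConcreteCategory.congr_hom (hpo.inr_desc gB hC hcomm)⟩

end

lemma exists_continuous_prod_desc {T : Type v} [TopologicalSpace T] [LocallyCompactSpace T]
    {A B C D : TopCat.{max u v}} {i : A ⟶ B} {f : A ⟶ C} {k : B ⟶ D} {j : C ⟶ D}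
    (hpo : IsPushout i f k j) {X : Type (max u v)} [TopologicalSpace X]
    {g : T × B → X} {h : T × C → X} (hg : Continuous g) (hh : Continuous h)
    (hgh : ∀ t a, g (t, i a) = h (t, f a)) :
    ∃ K : T × D → X, Continuous K ∧ (∀ t b, K (t, k b) = g (t, b)) ∧
      ∀ t c, K (t, j c) = h (t, c) := by
  let gB : C(B, C(T, X)) := ContinuousMap.curry ⟨fun p => g (p.2, p.1), by fun_prop⟩
  let hC : C(C, C(T, X)) := ContinuousMap.curry ⟨fun p => h (p.2, p.1), by fun_prop⟩
  obtain ⟨φ, hφ, hφk, hφj⟩ := hpo.exists_continuous_desc gB.continuous hC.continuous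
    fun a => ContinuousMap.ext fun t => hgh t a
  exact ⟨fun p => φ p.2 p.1, by fun_prop, fun t b => DFunLike.congr_fun (hφk b) t,
    fun t c => DFunLike.congr_fun (hφj c) t⟩

end CategoryTheory.IsPushout

theorem sdrInclusion_pushout_general {A B C D : TopCat.{u}} (i : A ⟶ B) (f : A ⟶ C)
    (k : B ⟶ D) (j : C ⟶ D) (hpo : CategoryTheory.IsPushout i f k j)
    (hi : IsSDRInclusion i) : IsSDRInclusion j := by
  obtain ⟨-, r, H, hr, hH, hri, hH0, hH1, hHi⟩ := hi
  obtain ⟨r', hr', hr'k, hr'j⟩ := hpo.exists_continuous_desc (g := f ∘ r) (h := id)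
    (by fun_prop) continuous_id fun a => congrArg f (congrFun hri a)
  obtain ⟨K, hK, hKk, hKj⟩ := hpo.exists_continuous_prod_desc (T := unitInterval)
    (g := fun p => k (H p)) (h := fun p => j p.2) (by fun_prop) (by fun_prop)
    fun t a => by simp [hHi, hpo.w_apply]
  refine ⟨j.hom.continuous, r', K, hr', hK, funext hr'j, fun d => ?_, fun d => ?_, hKj⟩
  · obtain ⟨b, rfl⟩ | ⟨c, rfl⟩ := hpo.exists_eq_or_exists_eq d
    · simp [hKk, hH0]
    · simp [hKj]
  · obtain ⟨b, rfl⟩ | ⟨c, rfl⟩ := hpo.exists_eq_or_exists_eq d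
    · simp [hKk, hH1, hr'k, hpo.w_apply]
    · simp [hKj, hr'j]

/-- Inclusions of strong deformation retracts are closed under pushout in `Top`:
if `i : A → B` is an inclusion of a strong deformation retract and the square
`A → C`, `i : A → B`, `j : C → D`, `B → D` is a pushout, then `j` (assumed to be an
embedding) is an inclusion of a strong deformation retract. -/
theorem sdrInclusion_pushout {A B C D : TopCat.{u}} (i : A ⟶ B) (f : A ⟶ C)
    (k : B ⟶ D) (j : C ⟶ D) (hpo : CategoryTheory.IsPushout i f k j)
    (hi : IsSDRInclusion i) (hj : Topology.IsEmbedding j) : IsSDRInclusion j :=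
  sdrInclusion_pushout_general i f k j hpo hi
end

section
/- Consider a pushout square in topological spaces with left vertical map A × Sⁿ⁻¹ → A × Dⁿ (identity on A times the boundary inclusion) and top map A × Sⁿ⁻¹ → Y; then the induced map Y → Z into the pushout is a relative T₁-inclusion of spaces: for every open U ⊆ Y and every point z ∈ Z not in the image of U, there is an open W ⊆ Z with image(U) ⊆ W and z ∉ W. -/
/-!
Pull an open `U ⊆ Y` back to an open `V ⊆ A × Sⁿ⁻¹` and extend `V` radially to an open subset
of `A × Dⁿ` lying in the collar `‖x‖ > t`; glued with `U` this gives an open `W ⊆ Z` with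
`f⁻¹ W = U`. A point of `Z` outside `f '' U` is either `f y` with `y ∉ U`, or the image of a
point of the open disk cylinder, which `W` avoids once `t` is chosen to be that point's norm.
-/

open CategoryTheory Set Metric

universe u

lemma CategoryTheory.IsPushout.exists_isOpen_preimage_eq {X₁ X₂ X₃ X₄ : TopCat.{u}}
    {t : X₁ ⟶ X₂} {l : X₁ ⟶ X₃} {r : X₂ ⟶ X₄} {b : X₃ ⟶ X₄} (h : IsPushout t l r b)
    {U : Set X₂} {V : Set X₃} (hU : IsOpen U) (hV : IsOpen V) (hUV : t ⁻¹' U = l ⁻¹' V) :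
    ∃ W : Set X₄, IsOpen W ∧ r ⁻¹' W = U ∧ b ⁻¹' W = V := by
  -- Open sets are the preimages of `True` under maps to Sierpiński space.
  let χU : X₂ ⟶ TopCat.of (ULift Prop) :=
    TopCat.ofHom ⟨fun x => ⟨x ∈ U⟩, continuous_uliftUp.comp (isOpen_iff_continuous_mem.mp hU)⟩
  let χV : X₃ ⟶ TopCat.of (ULift Prop) :=
    TopCat.ofHom ⟨fun x => ⟨x ∈ V⟩, continuous_uliftUp.comp (isOpen_iff_continuous_mem.mp hV)⟩
  have hχ : t ≫ χU = l ≫ χV := by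
    ext x
    exact Iff.of_eq (congrArg (x ∈ ·) hUV)
  let χW := h.desc χU χV hχ
  refine ⟨{w | (χW w).down},
    isOpen_iff_continuous_mem.mpr (continuous_uliftDown.comp χW.hom.continuous), ?_, ?_⟩
  · ext x
    exact Iff.of_eq (congrArg ULift.down (ConcreteCategory.congr_hom (h.inl_desc χU χV hχ) x))
  · ext x
    exact Iff.of_eq (congrArg ULift.down (ConcreteCategory.congr_hom (h.inr_desc χU χV hχ) x))

lemma norm_lt_one_of_notMem_range_inclusion_sphere {X E : Type*} [SeminormedAddCommGroup E]
    {p : X × closedBall (0 : E) 1}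
    (hp : p ∉ range (Prod.map id (inclusion sphere_subset_closedBall))) : ‖(p.2 : E)‖ < 1 := by
  refine (mem_closedBall_zero_iff.mp p.2.2).lt_of_ne fun h => hp ?_
  exact ⟨(p.1, ⟨p.2, mem_sphere_zero_iff_norm.mpr h⟩), rfl⟩

section RadialExtension

variable {X E : Type*} [TopologicalSpace X] [NormedAddCommGroup E] [NormedSpace ℝ E]

lemma isOpen_setOf_lt_norm_and_normalize_mem {O : Set (X × E)} (hO : IsOpen O) {t : ℝ}
    (ht : 0 ≤ t) : IsOpen {q : X × E | t < ‖q.2‖ ∧ (q.1, ‖q.2‖⁻¹ • q.2) ∈ O} := by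
  have hlt : IsOpen {q : X × E | t < ‖q.2‖} := isOpen_lt continuous_const continuous_snd.norm
  refine ContinuousOn.isOpen_inter_preimage ?_ hlt hO
  refine continuousOn_fst.prodMk (ContinuousOn.smul ?_ continuousOn_snd)
  exact continuous_snd.norm.continuousOn.inv₀ fun q hq => (ht.trans_lt hq).ne'

lemma exists_isOpen_preimage_inclusion_sphere_eq {V : Set (X × sphere (0 : E) 1)} (hV : IsOpen V)
    {t : ℝ} (ht₀ : 0 ≤ t) (ht₁ : t < 1) :
    ∃ V' : Set (X × closedBall (0 : E) 1), IsOpen V' ∧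
      Prod.map id (inclusion sphere_subset_closedBall) ⁻¹' V' = V ∧ ∀ p ∈ V', t < ‖(p.2 : E)‖ := by
  obtain ⟨O, hO, rfl⟩ :=
    (Topology.IsEmbedding.id.prodMap Topology.IsEmbedding.subtypeVal).isInducing.isOpen_iff.mp hV
  -- Extend `V` outward along rays: keep the points of norm `> t` whose radial projection is in `O`.
  refine ⟨Prod.map id Subtype.val ⁻¹' {q | t < ‖q.2‖ ∧ (q.1, ‖q.2‖⁻¹ • q.2) ∈ O},
    (isOpen_setOf_lt_norm_and_normalize_mem hO ht₀).preimage
      (continuous_id.prodMap continuous_subtype_val), ?_, fun p hp => hp.1⟩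
  ext ⟨x, y⟩
  simp [ht₁]

end RadialExtension

/-- Pushing out along `A × Sⁿ⁻¹ → A × Dⁿ` yields a relative `T₁`-inclusion `Y → Z`:
for every open `U ⊆ Y` and every `z ∈ Z` outside the image of `U`, there is an open
`W ⊆ Z` containing the image of `U` and avoiding `z`. -/
theorem relT1_of_pushout_sphere_disk (n : ℕ) (A : Type) [TopologicalSpace A]
    {Y Z : TopCat.{0}}
    (top : TopCat.of (A × (Metric.sphere (0 : EuclideanSpace ℝ (Fin n)) 1 : Set _)) ⟶ Y)
    (bot : TopCat.of (A × (Metric.closedBall (0 : EuclideanSpace ℝ (Fin n)) 1 : Set _)) ⟶ Z)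
    (f : Y ⟶ Z)
    (hpo : IsPushout
      (TopCat.ofHom (ContinuousMap.prodMap (ContinuousMap.id A)
        ⟨Set.inclusion Metric.sphere_subset_closedBall,
          continuous_inclusion Metric.sphere_subset_closedBall⟩ : C(_,_)))
      top bot f) :
    ∀ U : Set Y, IsOpen U → ∀ z : Z, z ∉ f '' U →
      ∃ W : Set Z, IsOpen W ∧ f '' U ⊆ W ∧ z ∉ W := by
  intro U hU z hz
  have extend : ∀ t : ℝ, 0 ≤ t → t < 1 → ∃ W : Set Z, IsOpen W ∧ f ⁻¹' W = U ∧
      ∀ p, bot p ∈ W → t < ‖(p.2 : EuclideanSpace ℝ (Fin n))‖ := by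
    intro t ht₀ ht₁
    obtain ⟨V, hV, hVU, hVt⟩ :=
      exists_isOpen_preimage_inclusion_sphere_eq (hU.preimage top.hom.continuous) ht₀ ht₁
    obtain ⟨W, hW, hWU, hWV⟩ := hpo.flip.exists_isOpen_preimage_eq hU hV hVU.symm
    exact ⟨W, hW, hWU, fun p hp => hVt p (hWV ▸ hp)⟩
  rcases Limits.Types.eq_or_eq_of_isPushout' (hpo.flip.map (forget TopCat)) z with
    ⟨y, rfl⟩ | ⟨p, rfl, hp⟩
  · obtain ⟨W, hW, hWU, -⟩ := extend 0 le_rfl one_pos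
    exact ⟨W, hW, hWU ▸ image_preimage_subset f W, fun hy => hz ⟨y, hWU ▸ hy, rfl⟩⟩
  · obtain ⟨W, hW, hWU, hWt⟩ :=
      extend _ (norm_nonneg _) (norm_lt_one_of_notMem_range_inclusion_sphere hp)
    exact ⟨W, hW, hWU ▸ image_preimage_subset f W, fun hpW => (hWt p hpW).false⟩
end
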